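/- Let A be a unital C*-algebra. For every x ∈ A with ‖x‖ < 1 - 2/n (where n ≥ 3 is an integer), x can be written as the average (1/n)(u_1 + ... + u_n) of n unitaries u_1,...,u_n in A. -/

import Mathlib

/-!
If `u` is unitary and `‖y‖ < 1`, then `u + y = u (1 + u⋆ y)` is invertible of norm at most `2`.
An invertible `a` with `‖a‖ ≤ 2` is a sum of two unitaries: polar decomposition gives
`a = v |a|` with `v` unitary, and the selfadjoint contraction `|a| / 2` is the real part of the
unitary `w = |a| / 2 + i √(1 - |a|² / 4)`, so `a = v w + v w⋆`. Hence `u + y` is a sum of two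
unitaries, and splitting off `a / (k + 2)` shows inductively that `u + a` is a sum of `k + 2`
unitaries whenever `‖a‖ < k + 1`. For `‖x‖ < 1 - 2 / n` take `u = 1`, `a = n x - 1`, `k = n - 2`.
-/

section

variable {A : Type*} [CStarAlgebra A]

lemma IsSelfAdjoint.exists_unitary_add_star_eq {b : A} (hb : IsSelfAdjoint b)
    (hb_norm : ‖b‖ ≤ 2) :
    ∃ w : unitary A, (w : A) + star (w : A) = b := by
  let _ := CStarAlgebra.spectralOrder A
  let _ := CStarAlgebra.spectralOrderedRing A
  let c : selfAdjoint A := ⟨(2⁻¹ : ℝ) • b, (IsSelfAdjoint.all _).smul hb⟩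
  have hc : ‖c‖ ≤ 1 := by
    change ‖(2⁻¹ : ℝ) • b‖ ≤ 1
    rw [norm_smul, Real.norm_of_nonneg (by norm_num)]
    linarith
  refine ⟨selfAdjoint.unitarySelfAddISMul c hc, ?_⟩
  have h := congrArg Subtype.val (selfAdjoint.realPart_unitarySelfAddISMul c hc)
  rw [realPart_apply_coe] at h
  exact smul_right_injective A (by norm_num : (2⁻¹ : ℝ) ≠ 0) h

lemma IsUnit.exists_unitary_mul_abs_eq [PartialOrder A] [StarOrderedRing A] {a : A}
    (ha : IsUnit a) : ∃ u : unitary A, (u : A) * CFC.abs a = a := by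
  set s := CFC.abs a
  have hs : IsUnit s := (CFC.isUnit_sqrt_iff _).2 (ha.star.mul ha)
  have hs_sa : IsSelfAdjoint s := (CFC.abs_nonneg a).isSelfAdjoint
  set t := Ring.inverse s
  have hu : a * t ∈ unitary A := by
    rw [(ha.mul hs.ringInverse).mem_unitary_iff_star_mul_self, star_mul, hs_sa.ringInverse.star_eq,
      mul_assoc, ← mul_assoc (star a), ← CFC.abs_mul_abs, ← mul_assoc, ← mul_assoc,
      Ring.inverse_mul_cancel s hs, one_mul, Ring.mul_inverse_cancel s hs]
  exact ⟨⟨a * t, hu⟩, by rw [mul_assoc, Ring.inverse_mul_cancel s hs, mul_one]⟩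

lemma IsUnit.exists_unitary_add_eq {a : A} (ha : IsUnit a) (ha_norm : ‖a‖ ≤ 2) :
    ∃ v w : unitary A, (v + w : A) = a := by
  let _ := CStarAlgebra.spectralOrder A
  let _ := CStarAlgebra.spectralOrderedRing A
  obtain ⟨u, hu⟩ := ha.exists_unitary_mul_abs_eq
  obtain ⟨w, hw⟩ := (CFC.abs_nonneg a).isSelfAdjoint.exists_unitary_add_star_eq
    (CFC.norm_abs.trans_le ha_norm)
  exact ⟨u * w, u * star w, by simp only [Submonoid.coe_mul, Unitary.coe_star, ← mul_add, hw, hu]⟩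

namespace Unitary

lemma isUnit_add_of_norm_lt_one (u : unitary A) {y : A} (hy : ‖y‖ < 1) :
    IsUnit ((u : A) + y) := by
  have h : (u : A) + y = u * (1 - -(star (u : A) * y)) := by
    rw [sub_neg_eq_add, mul_add, mul_one, ← mul_assoc, mul_star_self_of_mem u.2, one_mul]
  rw [h]
  refine isUnit_coe.mul (isUnit_one_sub_of_norm_lt_one ?_)
  rwa [norm_neg, ← coe_star, CStarRing.norm_coe_unitary_mul]

variable [Nontrivial A]

lemma exists_add_eq_add_of_norm_lt_one (u : unitary A) {y : A} (hy : ‖y‖ < 1) :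
    ∃ v w : unitary A, (v + w : A) = u + y :=
  (isUnit_add_of_norm_lt_one u hy).exists_unitary_add_eq <| by
    grw [norm_add_le, CStarRing.norm_coe_unitary, hy]; norm_num

lemma exists_sum_eq_add_of_norm_lt (n : ℕ) (u : unitary A) {a : A} (ha : ‖a‖ < n + 1) :
    ∃ f : Fin (n + 2) → unitary A, ∑ i, (f i : A) = u + a := by
  induction n generalizing u a with
  | zero =>
    obtain ⟨v, w, h⟩ := exists_add_eq_add_of_norm_lt_one u (by simpa using ha)
    exact ⟨![v, w], by simpa [Fin.sum_univ_two] using h⟩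
  | succ n ih =>
    have hn : (0 : ℝ) < n + 2 := by positivity
    have ha' : ‖a‖ < n + 2 := by push_cast at ha; linarith
    set y := ((n : ℝ) + 2)⁻¹ • a
    set b := (((n : ℝ) + 1) / (n + 2)) • a
    have hyb : y + b = a := by
      rw [← add_smul, show ((n : ℝ) + 2)⁻¹ + (n + 1) / (n + 2) = 1 by field_simp; ring, one_smul]
    have hy : ‖y‖ < 1 := by
      rw [norm_smul, Real.norm_of_nonneg (by positivity), inv_mul_lt_one₀ hn]
      exact ha'
    have hb : ‖b‖ < n + 1 := by
      rw [norm_smul, Real.norm_of_nonneg (by positivity), div_mul_eq_mul_div, div_lt_iff₀ hn]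
      gcongr
    obtain ⟨v, w, hvw⟩ := exists_add_eq_add_of_norm_lt_one u hy
    obtain ⟨f, hf⟩ := ih w hb
    refine ⟨Fin.cons v f, ?_⟩
    rw [Fin.sum_univ_succ, Fin.cons_zero]
    simp only [Fin.cons_succ, hf]
    rw [← hyb, ← add_assoc, hvw, add_assoc]

end Unitary

lemma CStarAlgebra.exists_sum_unitary_eq_of_norm_lt [Nontrivial A] (n : ℕ) {z : A}
    (hz : ‖z‖ < n) : ∃ f : Fin (n + 2) → unitary A, ∑ i, (f i : A) = z := by
  have h : ‖z - 1‖ < n + 1 := by grw [norm_sub_le, CStarRing.norm_one]; linarith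
  simpa using Unitary.exists_sum_eq_add_of_norm_lt n 1 h

end

/-- Kadison–Pedersen: in a unital C*-algebra, any element of norm `< 1 - 2/n`
(`n ≥ 3`) is the average of `n` unitaries. -/
theorem stmt2 {A : Type*} [NormedRing A] [StarRing A] [CStarRing A]
    [NormedAlgebra ℂ A] [CompleteSpace A] [StarModule ℂ A]
    (n : ℕ) (hn : 3 ≤ n) (x : A) (hx : ‖x‖ < 1 - 2 / (n : ℝ)) :
    ∃ u : Fin n → unitary A, x = (n : ℂ)⁻¹ • ∑ i, (u i : A) := by
  let _ : CStarAlgebra A := ⟨⟩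
  obtain hA | hA := subsingleton_or_nontrivial A
  · exact ⟨fun _ => 1, Subsingleton.elim _ _⟩
  obtain ⟨m, rfl⟩ : ∃ m, n = m + 2 := ⟨n - 2, by omega⟩
  have hm : (0 : ℝ) < (m + 2 : ℕ) := by positivity
  obtain ⟨u, hu⟩ := CStarAlgebra.exists_sum_unitary_eq_of_norm_lt m
    (z := ((m + 2 : ℕ) : ℂ) • x) <| by
    rw [norm_smul, Complex.norm_natCast]
    calc _ < ((m + 2 : ℕ) : ℝ) * (1 - 2 / ((m + 2 : ℕ) : ℝ)) := by gcongr
      _ = m := by field_simp; push_cast; ring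
  refine ⟨u, ?_⟩
  rw [hu, smul_smul, inv_mul_cancel₀ (Nat.cast_ne_zero.2 (by omega)), one_smul]
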